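/- For the inductively defined derivability relation of the symmetric/asymmetric encryption intruder model (rules Id, Pub, P_L, P_R, S_L, S_R, A_L, A_R), the relevancy axiom holds: if Γ ∪ {name a} ⊢ M and the name a occurs neither in any message of Γ nor in M, then Γ ⊢ M. -/
import Mathlib


inductive Msg where
  | name : Nat → Msg
  | pair : Msg → Msg → Msg
  | senc : Msg → Msg → Msg
  | aenc : Msg → Msg → Msg
  | pub  : Msg → Msg
deriving DecidableEq

inductive Deriv : Finset Msg → Msg → Prop where
  | id {Γ M} : M ∈ Γ → Deriv Γ M
  | pub {Γ K} : Deriv Γ K → Deriv Γ (Msg.pub K)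
  | pairL {Γ M N M'} : Msg.pair M N ∈ Γ → Deriv (Γ ∪ {M, N}) M' → Deriv Γ M'
  | pairR {Γ M N} : Deriv Γ M → Deriv Γ N → Deriv Γ (Msg.pair M N)
  | sencL {Γ M K N} : Msg.senc M K ∈ Γ → Deriv Γ K → Deriv (Γ ∪ {M, K}) N → Deriv Γ N
  | sencR {Γ M K} : Deriv Γ M → Deriv Γ K → Deriv Γ (Msg.senc M K)
  | aencL {Γ M K N} : Msg.aenc M (Msg.pub K) ∈ Γ → Deriv Γ K → Deriv (Γ ∪ {M, K}) N → Deriv Γ N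
  | aencR {Γ M N} : Deriv Γ M → Deriv Γ N → Deriv Γ (Msg.aenc M N)

def Msg.names : Msg → Finset Nat
  | .name a => {a}
  | .pair M N => M.names ∪ N.names
  | .senc M N => M.names ∪ N.names
  | .aenc M N => M.names ∪ N.names
  | .pub M => M.names

lemma Deriv.relevancy_aux {Δ : Finset Msg} {M : Msg} (h : Deriv Δ M) (a : Nat)
    (hΔ : ∀ N ∈ Δ, N = Msg.name a ∨ a ∉ N.names) (hM : a ∉ M.names) :
    Deriv (Δ.erase (Msg.name a)) M := by
  induction h with
  | @id Γ M h =>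
      exact .id (Finset.mem_erase.2 ⟨by rintro rfl; exact hM (by simp [Msg.names]), h⟩)
  | pub h ih => exact .pub (ih hΔ (by simpa [Msg.names] using hM))
  | @pairL Γ M N M' hmem hd ih =>
      have hp : a ∉ (Msg.pair M N).names := (hΔ _ hmem).resolve_left (by simp)
      simp [Msg.names] at hp
      obtain ⟨hm, hn⟩ := hp
      have hinv : ∀ X ∈ Γ ∪ {M, N}, X = Msg.name a ∨ a ∉ X.names := by
        intro X hX
        rcases Finset.mem_union.1 hX with hX | hX
        · exact hΔ _ hX
        · simp at hX; rcases hX with rfl | rfl <;> exact Or.inr ‹_›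
      have := ih hinv hM
      rw [Finset.erase_union_distrib] at this
      have heq : ({M, N} : Finset Msg).erase (Msg.name a) = {M, N} := by
        apply Finset.erase_eq_of_notMem
        simp only [Finset.mem_insert, Finset.mem_singleton]
        rintro (rfl | rfl)
        · exact hm (by simp [Msg.names])
        · exact hn (by simp [Msg.names])
      rw [heq] at this
      exact .pairL (Finset.mem_erase.2 ⟨by simp, hmem⟩) this
  | @sencL Γ M K N hmem hk hd ihk ih =>
      have hp : a ∉ (Msg.senc M K).names := (hΔ _ hmem).resolve_left (by simp)
      simp [Msg.names] at hp
      obtain ⟨hm, hn⟩ := hp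
      have hinv : ∀ X ∈ Γ ∪ {M, K}, X = Msg.name a ∨ a ∉ X.names := by
        intro X hX
        rcases Finset.mem_union.1 hX with hX | hX
        · exact hΔ _ hX
        · simp at hX; rcases hX with rfl | rfl <;> exact Or.inr ‹_›
      have := ih hinv hM
      rw [Finset.erase_union_distrib] at this
      have heq : ({M, K} : Finset Msg).erase (Msg.name a) = {M, K} := by
        apply Finset.erase_eq_of_notMem
        simp only [Finset.mem_insert, Finset.mem_singleton]
        rintro (rfl | rfl)
        · exact hm (by simp [Msg.names])
        · exact hn (by simp [Msg.names])
      rw [heq] at this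
      exact .sencL (Finset.mem_erase.2 ⟨by simp, hmem⟩) (ihk hΔ hn) this
  | @aencL Γ M K N hmem hk hd ihk ih =>
      have hp : a ∉ (Msg.aenc M (Msg.pub K)).names := (hΔ _ hmem).resolve_left (by simp)
      simp [Msg.names] at hp
      obtain ⟨hm, hn⟩ := hp
      have hinv : ∀ X ∈ Γ ∪ {M, K}, X = Msg.name a ∨ a ∉ X.names := by
        intro X hX
        rcases Finset.mem_union.1 hX with hX | hX
        · exact hΔ _ hX
        · simp at hX; rcases hX with rfl | rfl <;> exact Or.inr ‹_›
      have := ih hinv hM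
      rw [Finset.erase_union_distrib] at this
      have heq : ({M, K} : Finset Msg).erase (Msg.name a) = {M, K} := by
        apply Finset.erase_eq_of_notMem
        simp only [Finset.mem_insert, Finset.mem_singleton]
        rintro (rfl | rfl)
        · exact hm (by simp [Msg.names])
        · exact hn (by simp [Msg.names])
      rw [heq] at this
      exact .aencL (Finset.mem_erase.2 ⟨by simp, hmem⟩) (ihk hΔ hn) this
  | pairR h1 h2 ih1 ih2 =>
      simp [Msg.names] at hM
      exact .pairR (ih1 hΔ hM.1) (ih2 hΔ hM.2)
  | sencR h1 h2 ih1 ih2 =>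
      simp [Msg.names] at hM
      exact .sencR (ih1 hΔ hM.1) (ih2 hΔ hM.2)
  | aencR h1 h2 ih1 ih2 =>
      simp [Msg.names] at hM
      exact .aencR (ih1 hΔ hM.1) (ih2 hΔ hM.2)

theorem Deriv.relevancy {Γ : Finset Msg} {a : Nat} {M : Msg}
    (h : Deriv (insert (Msg.name a) Γ) M)
    (hΓ : ∀ N ∈ Γ, a ∉ N.names) (hM : a ∉ M.names) :
    Deriv Γ M := by
  have hinv : ∀ N ∈ insert (Msg.name a) Γ, N = Msg.name a ∨ a ∉ N.names := by
    intro N hN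
    rcases Finset.mem_insert.1 hN with rfl | hN
    · exact Or.inl rfl
    · exact Or.inr (hΓ _ hN)
  have := h.relevancy_aux a hinv hM
  rwa [Finset.erase_insert_eq_erase, Finset.erase_eq_of_notMem
    (fun hmem => hΓ _ hmem (by simp [Msg.names]))] at this
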